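/- arXiv:2102.06708 — 2 statements merged into one kernel-verified Lean document; each statement's English description precedes it below -/
import Mathlib

section
/- Let n ≥ 1, let s, t : Fin n → ℝ with sₖ > 0 and tₖ > 0 for all k, and let L be a real symplectic 2n×2n matrix (Lᵀ J L = J). Then the function α ↦ (1/(2(1-α)))·Tr(D((1-α)·t)⁻¹ · Lᵀ·D(α·s)·L) tends, as α → 1 from the left, to (1/2)·∑ₖ tₖ·[(Lᵀ·D(s)·L)ₖₖ + (Lᵀ·D(s)·L)_{n+k,n+k}]. -/
open Matrix Filter
open scoped Topology

/-- The real hyperbolic cotangent. -/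
noncomputable def coth (x : ℝ) : ℝ := Real.cosh x / Real.sinh x

/-- The canonical symplectic form `J = [[0, I], [-I, 0]]` as a `2n × 2n` real matrix. -/
noncomputable def symplecticJ (n : ℕ) : Matrix (Fin n ⊕ Fin n) (Fin n ⊕ Fin n) ℝ :=
  Matrix.fromBlocks 0 1 (-1) 0

/-- The `2n × 2n` diagonal matrix whose `k`-th and `(n+k)`-th diagonal entries both equal
`(1/2)·coth(rₖ/2)`. -/
noncomputable def Dmat (n : ℕ) (r : Fin n → ℝ) :
    Matrix (Fin n ⊕ Fin n) (Fin n ⊕ Fin n) ℝ :=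
  Matrix.diagonal
    (Sum.elim (fun k => (1 / 2) * coth (r k / 2)) (fun k => (1 / 2) * coth (r k / 2)))

/-! Inverting the diagonal matrix `D((1-α)t)` gives diagonal entries `2 tanh((1-α)tₖ/2)`, so the
quantity is `∑ₖ tanh((1-α)tₖ/2)/(1-α) · (Mα₍ₖₖ₎ + Mα₍ₙ₊ₖ,ₙ₊ₖ₎)` with `Mα = Lᵀ D(αs) L`. As `α → 1`,
`tanh((1-α)c)/(1-α) → c` (the derivative of `tanh` at `0` is `1`) and `Mα → M₁` by continuity of
`coth` away from `0`. -/

theorem Real.hasDerivAt_tanh (x : ℝ) : HasDerivAt Real.tanh (1 / Real.cosh x ^ 2) x := by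
  have h := (Real.hasDerivAt_sinh x).div (Real.hasDerivAt_cosh x) (Real.cosh_pos x).ne'
  rw [show Real.tanh = Real.sinh / Real.cosh from funext Real.tanh_eq_sinh_div_cosh]
  exact h.congr_deriv (by rw [← Real.cosh_sq_sub_sinh_sq x]; ring)

theorem tendsto_tanh_mul_one_sub_div (c : ℝ) :
    Tendsto (fun α : ℝ => Real.tanh ((1 - α) * c) / (1 - α)) (𝓝[≠] 1) (𝓝 c) := by
  have hderiv : HasDerivAt (fun α : ℝ => Real.tanh ((1 - α) * c)) (-c) 1 := by
    have h := (Real.hasDerivAt_tanh ((1 - 1) * c)).comp 1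
      (((hasDerivAt_id (1 : ℝ)).const_sub 1).mul_const c)
    simpa [Function.comp_def] using h
  have hslope := (hasDerivAt_iff_tendsto_slope.mp hderiv).neg
  rw [neg_neg] at hslope
  refine hslope.congr fun α => ?_
  rw [slope_def_field]
  simp only [sub_self, zero_mul, Real.tanh_zero, sub_zero]
  rw [← neg_sub, div_neg]

theorem coth_mul_tanh {x : ℝ} (hx : x ≠ 0) : coth x * Real.tanh x = 1 := by
  have hsinh : Real.sinh x ≠ 0 := Real.sinh_ne_zero.mpr hx
  rw [coth, Real.tanh_eq_sinh_div_cosh]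
  field_simp [(Real.cosh_pos x).ne']

theorem continuousAt_coth {x : ℝ} (hx : x ≠ 0) : ContinuousAt coth x :=
  Real.continuous_cosh.continuousAt.div Real.continuous_sinh.continuousAt
    (Real.sinh_ne_zero.mpr hx)

section Dmat

variable {n : ℕ} {r : Fin n → ℝ}

theorem inv_Dmat (hr : ∀ k, r k ≠ 0) :
    (Dmat n r)⁻¹ = diagonal
      (Sum.elim (fun k => 2 * Real.tanh (r k / 2)) (fun k => 2 * Real.tanh (r k / 2))) := by
  refine inv_eq_right_inv ?_
  rw [Dmat, diagonal_mul_diagonal, ← diagonal_one]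
  congr 1
  ext (k | k) <;>
  · simp only [Sum.elim_inl, Sum.elim_inr]
    linear_combination coth_mul_tanh (div_ne_zero (hr k) two_ne_zero)

theorem trace_inv_Dmat_mul (hr : ∀ k, r k ≠ 0) (M : Matrix (Fin n ⊕ Fin n) (Fin n ⊕ Fin n) ℝ) :
    ((Dmat n r)⁻¹ * M).trace
      = ∑ k, 2 * Real.tanh (r k / 2) * (M (Sum.inl k) (Sum.inl k) + M (Sum.inr k) (Sum.inr k)) := by
  simp only [inv_Dmat hr, trace, diag, diagonal_mul, Fintype.sum_sum_type, Sum.elim_inl,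
    Sum.elim_inr, mul_add, Finset.sum_add_distrib]

theorem continuousAt_Dmat (hr : ∀ k, r k ≠ 0) : ContinuousAt (Dmat n) r := by
  have hcoth : ∀ k, ContinuousAt (fun r : Fin n → ℝ => (1 / 2) * coth (r k / 2)) r := fun k =>
    continuousAt_const.mul <|
      ContinuousAt.comp (f := fun r : Fin n → ℝ => r k / 2)
        (continuousAt_coth (div_ne_zero (hr k) two_ne_zero))
        ((continuous_apply k).div_const 2).continuousAt
  refine (continuous_id.matrix_diagonal).continuousAt.comp (continuousAt_pi.2 ?_)
  rintro (k | k)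
  exacts [hcoth k, hcoth k]

theorem tendsto_mul_Dmat_smul_mul_apply {s : Fin n → ℝ} (hs : ∀ k, s k ≠ 0)
    (A B : Matrix (Fin n ⊕ Fin n) (Fin n ⊕ Fin n) ℝ) (i j : Fin n ⊕ Fin n) :
    Tendsto (fun α : ℝ => (A * Dmat n (α • s) * B) i j) (𝓝 1) (𝓝 ((A * Dmat n s * B) i j)) := by
  have hD : ContinuousAt (fun α : ℝ => Dmat n (α • s)) 1 :=
    (continuousAt_Dmat hs).comp_of_eq (continuous_id.smul continuous_const).continuousAt
      (one_smul ℝ s)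
  have hprod : ContinuousAt (fun α : ℝ => A * Dmat n (α • s) * B) 1 :=
    (continuousAt_const.mul hD).mul continuousAt_const
  simpa [Function.comp_def] using
    ((continuous_id.matrix_elem i j).continuousAt.comp hprod).tendsto

end Dmat

theorem petz_renyi_RIV_trace_limit_general (n : ℕ)
    (s t : Fin n → ℝ) (hs : ∀ k, 0 < s k) (ht : ∀ k, 0 < t k)
    (L : Matrix (Fin n ⊕ Fin n) (Fin n ⊕ Fin n) ℝ) :
    Tendsto
      (fun α : ℝ =>
        (1 / (2 * (1 - α))) *
          ((Dmat n ((1 - α) • t))⁻¹ * (Lᵀ * Dmat n (α • s) * L)).trace)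
      (nhdsWithin 1 (Set.Ioo (0 : ℝ) 1))
      (nhds ((1 / 2) * ∑ k : Fin n,
        t k * ((Lᵀ * Dmat n s * L) (Sum.inl k) (Sum.inl k)
          + (Lᵀ * Dmat n s * L) (Sum.inr k) (Sum.inr k)))) := by
  have hentry : ∀ i, Tendsto (fun α : ℝ => (Lᵀ * Dmat n (α • s) * L) i i) (𝓝[≠] 1)
      (𝓝 ((Lᵀ * Dmat n s * L) i i)) := fun i =>
    (tendsto_mul_Dmat_smul_mul_apply (fun k => (hs k).ne') _ _ i i).mono_left nhdsWithin_le_nhds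
  have hlim := tendsto_finsetSum Finset.univ fun k _ =>
    (tendsto_tanh_mul_one_sub_div (t k / 2)).mul ((hentry (Sum.inl k)).add (hentry (Sum.inr k)))
  convert (hlim.mono_left (nhdsWithin_mono _
      fun α (hα : α ∈ Set.Ioo (0 : ℝ) 1) => hα.2.ne)).congr' ?_ using 2
  · rw [Finset.mul_sum]
    exact Finset.sum_congr rfl fun k _ => by ring
  · filter_upwards [self_mem_nhdsWithin] with α hα
    have hα' : 1 - α ≠ 0 := (sub_pos.mpr hα.2).ne'
    rw [trace_inv_Dmat_mul fun k => by simp [hα', (ht k).ne'], Finset.mul_sum]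
    refine Finset.sum_congr rfl fun k _ => ?_
    simp only [Pi.smul_apply, smul_eq_mul]
    field_simp

/-- For `sₖ, tₖ > 0` and `L` symplectic,
`(1/(2(1-α)))·Tr(D((1-α)t)⁻¹ Lᵀ D(αs) L)` tends, as `α → 1⁻`, to
`(1/2)·∑ₖ tₖ [(Lᵀ D(s) L)ₖₖ + (Lᵀ D(s) L)_{n+k,n+k}]`. -/
theorem petz_renyi_RIV_trace_limit (n : ℕ) (hn : 1 ≤ n)
    (s t : Fin n → ℝ) (hs : ∀ k, 0 < s k) (ht : ∀ k, 0 < t k)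
    (L : Matrix (Fin n ⊕ Fin n) (Fin n ⊕ Fin n) ℝ)
    (hL : Lᵀ * symplecticJ n * L = symplecticJ n) :
    Tendsto
      (fun α : ℝ =>
        (1 / (2 * (1 - α))) *
          ((Dmat n ((1 - α) • t))⁻¹ * (Lᵀ * Dmat n (α • s) * L)).trace)
      (nhdsWithin 1 (Set.Ioo (0 : ℝ) 1))
      (nhds ((1 / 2) * ∑ k : Fin n,
        t k * ((Lᵀ * Dmat n s * L) (Sum.inl k) (Sum.inl k)
          + (Lᵀ * Dmat n s * L) (Sum.inr k) (Sum.inr k)))) :=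
  petz_renyi_RIV_trace_limit_general n s t hs ht L
end

section
/- Let n ≥ 1, let s, t : Fin n → ℝ with sₖ > 0 and tₖ > 0 for all k, let L be a real symplectic 2n×2n matrix (Lᵀ J L = J), and let m̃ ∈ ℝ^{2n}. For α ∈ (0,1) define R^I(α) = -(1/(1-α))·∑ₖ [α·log(1-e^{-sₖ}) - log(1-e^{-α·sₖ})], R^{II}(α) = ∑ₖ [-log(1-e^{-tₖ}) + (1/(1-α))·log(1-e^{-tₖ(1-α)})], R^{III}(α) = (1/(1-α))·m̃ᵀ·(Lᵀ·D(α·s)·L + D((1-α)·t))⁻¹·m̃, and R^{IV}(α) = (1/(2(1-α)))·log det(Lᵀ·D(α·s)·L + D((1-α)·t)). Then R^I(α) + R^{II}(α) + R^{III}(α) + R^{IV}(α) tends, as α → 1 from the left, to ∑ₖ [ -H(e^{-sₖ})/(1-e^{-sₖ}) - log(1-e^{-tₖ}) + (tₖ/2)·( (Lᵀ·D(s)·L)ₖₖ + (Lᵀ·D(s)·L)_{n+k,n+k} + 2·(m̃ₖ² + m̃_{n+k}²) - 1 ) ]. -/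
open Matrix Filter
open scoped Topology

/-- The Shannon function `H(p) = -p log p - (1-p) log (1-p)` (natural logarithm). -/
noncomputable def shannonH (p : ℝ) : ℝ :=
  -(p * Real.log p) - (1 - p) * Real.log (1 - p)

/-!
Put `ε = 1 - α`, `D = D(ε t)`, `E = diag (2 tanh (ε tₖ / 2))` and `A(α) = Lᵀ D(α s) L`. Then
`D E = 1` and `E / ε → diag t`, so `A + D = D (1 + E A) = (1 + A E) D`. Consequently
`(A + D)⁻¹ / ε = (E / ε) (1 + A E)⁻¹ → diag t`, which gives the limit of `R^{III}`, and
`log det (A + D) = ∑ log νₖ + log det (1 + E A)` with `νₖ = coth (ε tₖ / 2) / 2`. Since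
`(1 - e^{-x}) coth (x / 2) / 2 = (1 + e^{-x}) / 2`, the `log νₖ` cancel the divergent part of
`R^{II}`. Every remaining term is a difference quotient at `α = 1` of a function vanishing
there, so the limit is a sum of derivatives; that of `log det (1 + E A)` is the trace
`-∑ tₖ Aₖₖ(1)`, because `1 + E A = 1` at `α = 1`.
-/

open Real

noncomputable def halfCothHalf (x : ℝ) : ℝ := (1 / 2) * coth (x / 2)

section Scalar

variable {x : ℝ}

lemma halfCothHalf_mul_two_tanh (hx : x ≠ 0) : halfCothHalf x * (2 * tanh (x / 2)) = 1 := by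
  have hsinh : sinh (x / 2) ≠ 0 := sinh_ne_zero.2 (div_ne_zero hx two_ne_zero)
  have hcosh : cosh (x / 2) ≠ 0 := (cosh_pos _).ne'
  rw [halfCothHalf, coth, tanh_eq_sinh_div_cosh]
  field_simp

lemma halfCothHalf_ne_zero (hx : x ≠ 0) : halfCothHalf x ≠ 0 :=
  left_ne_zero_of_mul_eq_one (halfCothHalf_mul_two_tanh hx)

lemma one_sub_exp_neg_ne_zero (hx : x ≠ 0) : 1 - exp (-x) ≠ 0 := by
  rw [sub_ne_zero, ne_comm, Ne, exp_eq_one_iff, neg_eq_zero]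
  exact hx

lemma one_sub_exp_neg_mul_halfCothHalf (hx : x ≠ 0) :
    (1 - exp (-x)) * halfCothHalf x = (1 + exp (-x)) / 2 := by
  have hsinh : sinh (x / 2) ≠ 0 := sinh_ne_zero.2 (div_ne_zero hx two_ne_zero)
  have hexp : exp (-x) = exp (-(x / 2)) * exp (-(x / 2)) := by rw [← exp_add]; ring_nf
  have hinv : exp (x / 2) * exp (-(x / 2)) = 1 := by rw [← exp_add]; simp
  rw [halfCothHalf, coth, cosh_eq, hexp]
  rw [sinh_eq] at hsinh ⊢
  generalize exp (x / 2) = a, exp (-(x / 2)) = b at hsinh hinv ⊢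
  have hab : a - b ≠ 0 := by simpa using hsinh
  field_simp
  linear_combination (-2 * b) * hinv

lemma log_one_sub_exp_neg_add_log_halfCothHalf (hx : x ≠ 0) :
    log (1 - exp (-x)) + log (halfCothHalf x) = log ((1 + exp (-x)) / 2) := by
  rw [← log_mul (one_sub_exp_neg_ne_zero hx) (halfCothHalf_ne_zero hx),
    one_sub_exp_neg_mul_halfCothHalf hx]

lemma differentiableAt_halfCothHalf (hx : x ≠ 0) : DifferentiableAt ℝ halfCothHalf x := by
  have hsinh : sinh (x / 2) ≠ 0 := sinh_ne_zero.2 (div_ne_zero hx two_ne_zero)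
  unfold halfCothHalf coth
  fun_prop (disch := exact hsinh)

lemma hasDerivAt_two_tanh_half_one_sub (c : ℝ) :
    HasDerivAt (fun α => 2 * tanh ((1 - α) * c / 2)) (-c) 1 := by
  have htanh : HasDerivAt tanh 1 0 := by
    have h := (hasDerivAt_sinh 0).div (hasDerivAt_cosh 0) (cosh_pos 0).ne'
    rw [show sinh / cosh = tanh from funext fun y => (tanh_eq_sinh_div_cosh y).symm] at h
    simpa using h
  have hin : HasDerivAt (fun α : ℝ => (1 - α) * c / 2) (-c / 2) 1 :=
    ((((hasDerivAt_id (1 : ℝ)).const_sub 1).mul_const c).div_const 2).congr_deriv (by ring)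
  exact ((htanh.comp_of_eq 1 hin (by simp)).const_mul 2).congr_deriv (by ring)

lemma hasDerivAt_log_one_add_exp_neg_half (c : ℝ) :
    HasDerivAt (fun α => log ((1 + exp (-((1 - α) * c))) / 2)) (c / 2) 1 := by
  have hin : HasDerivAt (fun α : ℝ => -((1 - α) * c)) c 1 :=
    (((hasDerivAt_id (1 : ℝ)).const_sub 1).mul_const c).fun_neg.congr_deriv (by simp)
  convert ((hin.exp.const_add 1).div_const 2).log (by positivity) using 1
  simp

lemma neg_shannonH_exp_neg_div (hx : x ≠ 0) :
    -shannonH (exp (-x)) / (1 - exp (-x))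
      = log (1 - exp (-x)) - x * exp (-x) / (1 - exp (-x)) := by
  have h := one_sub_exp_neg_ne_zero hx
  rw [shannonH, log_exp]
  field_simp
  ring

lemma hasDerivAt_log_one_sub_exp_neg_mul (hx : x ≠ 0) :
    HasDerivAt (fun α => log (1 - exp (-(α * x)))) (x * exp (-x) / (1 - exp (-x))) 1 := by
  convert (((hasDerivAt_mul_const (x := 1) x).fun_neg.exp).const_sub 1).log
    (by simpa using one_sub_exp_neg_ne_zero hx) using 1
  simp [mul_comm]

end Scalar

lemma tendsto_div_sub_of_hasDerivAt {f : ℝ → ℝ} {f' a : ℝ} (hf : HasDerivAt f f' a)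
    (hfa : f a = 0) : Tendsto (fun y => f y / (y - a)) (𝓝[≠] a) (𝓝 f') := by
  refine hf.tendsto_slope.congr fun y => ?_
  rw [slope_def_field, hfa, sub_zero]

namespace Matrix

section

variable {ι R : Type*} [Fintype ι] [DecidableEq ι] [CommRing R] {A D E : Matrix ι ι R}

lemma det_add_of_mul_eq_one (h : D * E = 1) : (A + D).det = D.det * (1 + E * A).det := by
  rw [← det_mul, mul_add, mul_one, ← Matrix.mul_assoc, h, one_mul, add_comm]

lemma inv_add_of_mul_eq_one (h : E * D = 1) : (A + D)⁻¹ = E * (1 + A * E)⁻¹ := by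
  have hfac : A + D = (1 + A * E) * D := by
    rw [add_mul, one_mul, Matrix.mul_assoc, h, mul_one, add_comm]
  rw [hfac, mul_inv_rev, inv_eq_left_inv h]

end

theorem hasDerivAt_det_of_eq_one {𝕜 ι : Type*} [NontriviallyNormedField 𝕜] [Fintype ι]
    [DecidableEq ι] {B : 𝕜 → Matrix ι ι 𝕜} {B' : Matrix ι ι 𝕜} {x : 𝕜}
    (hB : ∀ i j, HasDerivAt (fun y => B y i j) (B' i j) x) (hBx : B x = 1) :
    HasDerivAt (fun y => (B y).det) B'.trace x := by
  simp_rw [det_apply']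
  refine (HasDerivAt.fun_sum fun σ _ =>
    (HasDerivAt.fun_finsetProd fun i _ => hB (σ i) i).const_mul
      (((Equiv.Perm.sign σ : ℤ) : 𝕜))).congr_deriv ?_
  -- A permutation `σ ≠ 1` moves some `j ≠ i`, so the factor `B x (σ j) j = 0` survives in the
  -- `i`-th term of the product rule.
  rw [Finset.sum_eq_single (1 : Equiv.Perm ι) _ (by simp)]
  · simp [hBx, trace]
  · intro σ _ hσ
    refine mul_eq_zero_of_right _ (Finset.sum_eq_zero fun i _ => ?_)
    obtain ⟨j, hj, hji⟩ := Finset.exists_mem_ne (Equiv.Perm.two_le_card_support_of_ne_one hσ) i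
    rw [Finset.prod_eq_zero (Finset.mem_erase.2 ⟨hji, Finset.mem_univ j⟩), zero_smul]
    rw [hBx, one_apply_ne (Equiv.Perm.mem_support.1 hj)]

end Matrix

section ThermalDiagonal

variable {ι : Type*} [DecidableEq ι]

noncomputable def cothDiag (r : ι → ℝ) : Matrix ι ι ℝ := diagonal fun i => halfCothHalf (r i)

/-- `(cothDiag r)⁻¹` when no `r i` vanishes but, unlike it, smooth through `r = 0`. -/
noncomputable def tanhDiag (r : ι → ℝ) : Matrix ι ι ℝ := diagonal fun i => 2 * tanh (r i / 2)

lemma Dmat_eq_cothDiag (n : ℕ) (r : Fin n → ℝ) : Dmat n r = cothDiag (Sum.elim r r) := by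
  rw [Dmat, cothDiag]
  congr 1
  ext (k | k) <;> rfl

lemma Dmat_smul (n : ℕ) (c : ℝ) (r : Fin n → ℝ) :
    Dmat n (c • r) = cothDiag (c • Sum.elim r r) := by
  rw [Dmat_eq_cothDiag]
  congr 1
  ext (k | k) <;> rfl

lemma tendsto_tanhDiag_one_sub (τ : ι → ℝ) :
    Tendsto (fun α : ℝ => tanhDiag ((1 - α) • τ)) (𝓝 1) (𝓝 0) := by
  simp only [tanhDiag, Pi.smul_apply, smul_eq_mul]
  rw [← diagonal_zero]
  refine (continuous_id.matrix_diagonal.tendsto _).comp (tendsto_pi_nhds.2 fun i => ?_)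
  simpa using (hasDerivAt_two_tanh_half_one_sub (τ i)).continuousAt.tendsto

lemma tendsto_smul_tanhDiag_one_sub (τ : ι → ℝ) :
    Tendsto (fun α : ℝ => (1 - α)⁻¹ • tanhDiag ((1 - α) • τ)) (𝓝[≠] 1) (𝓝 (diagonal τ)) := by
  have hdiag : ∀ α : ℝ, (1 - α)⁻¹ • tanhDiag ((1 - α) • τ)
      = diagonal fun i => -(2 * tanh ((1 - α) * τ i / 2) / (α - 1)) := fun α => by
    rw [tanhDiag, ← diagonal_smul]
    congr 1
    funext i
    rw [Pi.smul_apply, Pi.smul_apply, smul_eq_mul, smul_eq_mul, ← div_neg, neg_sub,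
      inv_mul_eq_div]
  simp only [hdiag]
  refine (continuous_id.matrix_diagonal.tendsto _).comp (tendsto_pi_nhds.2 fun i => ?_)
  simpa using (tendsto_div_sub_of_hasDerivAt (hasDerivAt_two_tanh_half_one_sub (τ i))
    (by simp)).neg

variable [Fintype ι]

lemma cothDiag_mul_tanhDiag {r : ι → ℝ} (hr : ∀ i, r i ≠ 0) : cothDiag r * tanhDiag r = 1 := by
  rw [cothDiag, tanhDiag, diagonal_mul_diagonal, ← diagonal_one]
  exact congrArg diagonal (funext fun i => halfCothHalf_mul_two_tanh (hr i))

lemma log_det_cothDiag {r : ι → ℝ} (hr : ∀ i, r i ≠ 0) :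
    log (cothDiag r).det = ∑ i, log (halfCothHalf (r i)) := by
  rw [cothDiag, det_diagonal, log_prod fun i _ => halfCothHalf_ne_zero (hr i)]

lemma differentiableAt_conj_cothDiag_smul_apply {σ : ι → ℝ} (hσ : ∀ i, σ i ≠ 0)
    (L : Matrix ι ι ℝ) (i j : ι) :
    DifferentiableAt ℝ (fun α : ℝ => (Lᵀ * cothDiag (α • σ) * L) i j) 1 := by
  simp only [mul_apply (M := Lᵀ * _), cothDiag, mul_diagonal, transpose_apply, Pi.smul_apply,
    smul_eq_mul]
  refine DifferentiableAt.fun_sum fun q _ => DifferentiableAt.mul_const ?_ _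
  refine (differentiableAt_const _).mul
    ((differentiableAt_halfCothHalf ?_).comp 1 (differentiableAt_id.mul_const _))
  simpa using hσ q

end ThermalDiagonal

lemma one_sub_smul_ne_zero {ι : Type*} {τ : ι → ℝ} (hτ : ∀ i, τ i ≠ 0) {α : ℝ} (hα : α ≠ 1)
    (i : ι) :
    ((1 - α) • τ) i ≠ 0 :=
  mul_ne_zero (sub_ne_zero.2 hα.symm) (hτ i)

section ThermalPerturbation

variable {ι : Type*} [Fintype ι] [DecidableEq ι] {A : ℝ → Matrix ι ι ℝ} {τ : ι → ℝ}

theorem tendsto_inv_add_cothDiag (hτ : ∀ i, τ i ≠ 0) (hA : ContinuousAt A 1) (m : ι → ℝ) :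
    Tendsto (fun α => 1 / (1 - α) * (m ⬝ᵥ (A α + cothDiag ((1 - α) • τ))⁻¹ *ᵥ m))
      (𝓝[≠] 1) (𝓝 (m ⬝ᵥ diagonal τ *ᵥ m)) := by
  have hC : Tendsto (fun α => 1 + A α * tanhDiag ((1 - α) • τ)) (𝓝[≠] 1) (𝓝 1) := by
    simpa using (tendsto_const_nhds.add (hA.tendsto.mul (tendsto_tanhDiag_one_sub τ))).mono_left
      nhdsWithin_le_nhds
  have hinv : ContinuousAt Inv.inv (1 : Matrix ι ι ℝ) :=
    continuousAt_matrix_inv _ (by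
      rw [det_one, Ring.inverse_eq_inv']; exact continuousAt_inv₀ one_ne_zero)
  have hlim := (tendsto_smul_tanhDiag_one_sub τ).mul (by simpa using hinv.tendsto.comp hC)
  rw [mul_one] at hlim
  refine (((continuous_const.dotProduct (continuous_id.matrix_mulVec continuous_const)).tendsto
    _).comp hlim).congr' ?_
  filter_upwards [self_mem_nhdsWithin] with α hα
  have hDE := mul_eq_one_comm.1 (cothDiag_mul_tanhDiag (one_sub_smul_ne_zero hτ hα))
  simp only [Function.comp_apply, id, inv_add_of_mul_eq_one hDE, smul_mul, smul_mulVec,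
    dotProduct_smul, smul_eq_mul, one_div]

theorem tendsto_log_det_add_cothDiag (hτ : ∀ i, τ i ≠ 0)
    (hA : ∀ i j, DifferentiableAt ℝ (fun α => A α i j) 1) :
    Tendsto (fun α => 1 / (2 * (1 - α)) * log (A α + cothDiag ((1 - α) • τ)).det
        + 1 / (2 * (1 - α)) * ∑ i, log (1 - exp (-(τ i * (1 - α)))))
      (𝓝[≠] 1) (𝓝 ((∑ i, τ i * (2 * A 1 i i - 1)) / 4)) := by
  set B : ℝ → Matrix ι ι ℝ := fun α => 1 + tanhDiag ((1 - α) • τ) * A α with hB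
  have hB1 : B 1 = 1 := by simp [hB, tanhDiag]
  have hBderiv : ∀ i j, HasDerivAt (fun α => B α i j) (-τ i * A 1 i j) 1 := fun i j => by
    simp only [hB, Matrix.add_apply, tanhDiag, diagonal_mul, Pi.smul_apply, smul_eq_mul]
    exact (((hasDerivAt_two_tanh_half_one_sub (τ i)).mul (hA i j).hasDerivAt).const_add
      _).congr_deriv (by simp)
  have hdet := hasDerivAt_det_of_eq_one hBderiv hB1
  have hdet_ne : ∀ᶠ α in 𝓝[≠] 1, (B α).det ≠ 0 :=
    (hdet.continuousAt.eventually_ne (by simp [hB1])).filter_mono nhdsWithin_le_nhds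
  have hΦ := ((hdet.log (by simp [hB1])).fun_add (HasDerivAt.fun_sum (u := Finset.univ)
    fun i _ => hasDerivAt_log_one_add_exp_neg_half (τ i))).const_mul (-1 / 2)
  refine ((tendsto_div_sub_of_hasDerivAt hΦ (by simp [hB1])).congr' ?_).mono_right
    (le_of_eq (congrArg 𝓝 ?_))
  · filter_upwards [self_mem_nhdsWithin, hdet_ne] with α hα hBα
    have hDE := cothDiag_mul_tanhDiag (one_sub_smul_ne_zero hτ hα)
    have hD : (cothDiag ((1 - α) • τ)).det ≠ 0 :=
      left_ne_zero_of_mul_eq_one (by rw [← det_mul, hDE, det_one])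
    have hsplit : ∑ i, log ((1 + exp (-((1 - α) * τ i))) / 2)
        = log (cothDiag ((1 - α) • τ)).det + ∑ i, log (1 - exp (-(τ i * (1 - α)))) := by
      rw [log_det_cothDiag (one_sub_smul_ne_zero hτ hα), ← Finset.sum_add_distrib]
      refine Finset.sum_congr rfl fun i _ => ?_
      rw [mul_comm (τ i), add_comm (log (halfCothHalf _))]
      exact (log_one_sub_exp_neg_add_log_halfCothHalf (one_sub_smul_ne_zero hτ hα i)).symm
    have hε : 1 - α ≠ 0 := sub_ne_zero.2 (Ne.symm hα)
    have hε' : α - 1 ≠ 0 := sub_ne_zero.2 hα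
    rw [det_add_of_mul_eq_one hDE, log_mul hD hBα, hsplit]
    field_simp
    ring
  · simp only [hB1, det_one, div_one, trace, diag, Finset.sum_div, Finset.mul_sum,
      ← Finset.sum_add_distrib]
    exact Finset.sum_congr rfl fun i _ => by ring

end ThermalPerturbation

theorem tendsto_neg_thermal_renyi_entropy {ι : Type*} [Fintype ι] {σ : ι → ℝ}
    (hσ : ∀ i, σ i ≠ 0) :
    Tendsto (fun α => -(1 / (1 - α)) *
        ∑ i, (α * log (1 - exp (-σ i)) - log (1 - exp (-(α * σ i)))))
      (𝓝[≠] 1) (𝓝 (∑ i, -shannonH (exp (-σ i)) / (1 - exp (-σ i)))) := by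
  have hf : HasDerivAt (fun α => ∑ i, (α * log (1 - exp (-σ i)) - log (1 - exp (-(α * σ i)))))
      (∑ i, -shannonH (exp (-σ i)) / (1 - exp (-σ i))) 1 :=
    HasDerivAt.fun_sum fun i _ => ((hasDerivAt_mul_const _).sub
      (hasDerivAt_log_one_sub_exp_neg_mul (hσ i))).congr_deriv
        (neg_shannonH_exp_neg_div (hσ i)).symm
  refine (tendsto_div_sub_of_hasDerivAt hf (by simp)).congr fun α => ?_
  rw [← neg_sub α 1, one_div, inv_neg, neg_neg, div_eq_inv_mul]

theorem petz_renyi_tendsto_relative_entropy_general (n : ℕ)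
    (s t : Fin n → ℝ) (hs : ∀ k, 0 < s k) (ht : ∀ k, 0 < t k)
    (L : Matrix (Fin n ⊕ Fin n) (Fin n ⊕ Fin n) ℝ)
    (mt : Fin n ⊕ Fin n → ℝ) :
    Tendsto
      (fun α : ℝ =>
        (-(1 / (1 - α)) * ∑ k : Fin n,
            (α * Real.log (1 - Real.exp (-s k)) - Real.log (1 - Real.exp (-(α * s k)))))
        + (∑ k : Fin n,
            (-Real.log (1 - Real.exp (-t k))
              + (1 / (1 - α)) * Real.log (1 - Real.exp (-(t k * (1 - α))))))
        + ((1 / (1 - α)) *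
            (mt ⬝ᵥ (Lᵀ * Dmat n (α • s) * L + Dmat n ((1 - α) • t))⁻¹ *ᵥ mt))
        + ((1 / (2 * (1 - α))) *
            Real.log ((Lᵀ * Dmat n (α • s) * L + Dmat n ((1 - α) • t)).det)))
      (nhdsWithin 1 (Set.Ioo (0 : ℝ) 1))
      (nhds (∑ k : Fin n,
        (-shannonH (Real.exp (-s k)) / (1 - Real.exp (-s k))
          - Real.log (1 - Real.exp (-t k))
          + (t k / 2) *
            ((Lᵀ * Dmat n s * L) (Sum.inl k) (Sum.inl k)
              + (Lᵀ * Dmat n s * L) (Sum.inr k) (Sum.inr k)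
              + 2 * ((mt (Sum.inl k)) ^ 2 + (mt (Sum.inr k)) ^ 2) - 1)))) := by
  have hσ : ∀ i, Sum.elim s s i ≠ 0 := by rintro (k | k) <;> exact (hs k).ne'
  have hτ : ∀ i, Sum.elim t t i ≠ 0 := by rintro (k | k) <;> exact (ht k).ne'
  have hA := differentiableAt_conj_cothDiag_smul_apply hσ L
  have hAc : ContinuousAt (fun α : ℝ => Lᵀ * cothDiag (α • Sum.elim s s) * L) 1 :=
    continuousAt_pi.2 fun i => continuousAt_pi.2 fun j => (hA i j).continuousAt
  have hlim := ((tendsto_neg_thermal_renyi_entropy fun k => (hs k).ne').add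
    ((tendsto_const_nhds (x := ∑ k, -log (1 - exp (-t k)))).add
      (tendsto_log_det_add_cothDiag hτ hA))).add (tendsto_inv_add_cothDiag hτ hAc mt)
  convert hlim.mono_left (nhdsWithin_mono _ fun α (hα : α ∈ Set.Ioo 0 1) => hα.2.ne) using 2
  · simp only [Dmat_smul, Fintype.sum_sum_type, Sum.elim_inl, Sum.elim_inr,
      Finset.sum_add_distrib, ← Finset.mul_sum, one_div, mul_inv]
    ring
  · simp only [one_smul, Dmat_eq_cothDiag, dotProduct, mulVec_diagonal, Fintype.sum_sum_type,
      Sum.elim_inl, Sum.elim_inr, Finset.sum_div, ← Finset.sum_add_distrib]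
    exact Finset.sum_congr rfl fun k _ => by ring

/-- **Convergence of the Petz–Rényi relative entropy to the relative entropy.**
With `R^I, R^{II}, R^{III}, R^{IV}` as in the paper, the sum
`R^I(α) + R^{II}(α) + R^{III}(α) + R^{IV}(α)` (which is `S_α(ρ||σ)`) tends, as `α → 1⁻`
within `(0,1)`, to the relative entropy
`∑ₖ [-H(e^{-sₖ})/(1-e^{-sₖ}) - log(1-e^{-tₖ})
      + (tₖ/2)((Lᵀ D(s) L)ₖₖ + (Lᵀ D(s) L)_{n+k,n+k} + 2(m̃ₖ² + m̃_{n+k}²) - 1)]`. -/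
theorem petz_renyi_tendsto_relative_entropy (n : ℕ) (hn : 1 ≤ n)
    (s t : Fin n → ℝ) (hs : ∀ k, 0 < s k) (ht : ∀ k, 0 < t k)
    (L : Matrix (Fin n ⊕ Fin n) (Fin n ⊕ Fin n) ℝ)
    (hL : Lᵀ * symplecticJ n * L = symplecticJ n)
    (mt : Fin n ⊕ Fin n → ℝ) :
    Tendsto
      (fun α : ℝ =>
        (-(1 / (1 - α)) * ∑ k : Fin n,
            (α * Real.log (1 - Real.exp (-s k)) - Real.log (1 - Real.exp (-(α * s k)))))
        + (∑ k : Fin n,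
            (-Real.log (1 - Real.exp (-t k))
              + (1 / (1 - α)) * Real.log (1 - Real.exp (-(t k * (1 - α))))))
        + ((1 / (1 - α)) *
            (mt ⬝ᵥ (Lᵀ * Dmat n (α • s) * L + Dmat n ((1 - α) • t))⁻¹ *ᵥ mt))
        + ((1 / (2 * (1 - α))) *
            Real.log ((Lᵀ * Dmat n (α • s) * L + Dmat n ((1 - α) • t)).det)))
      (nhdsWithin 1 (Set.Ioo (0 : ℝ) 1))
      (nhds (∑ k : Fin n,
        (-shannonH (Real.exp (-s k)) / (1 - Real.exp (-s k))
          - Real.log (1 - Real.exp (-t k))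
          + (t k / 2) *
            ((Lᵀ * Dmat n s * L) (Sum.inl k) (Sum.inl k)
              + (Lᵀ * Dmat n s * L) (Sum.inr k) (Sum.inr k)
              + 2 * ((mt (Sum.inl k)) ^ 2 + (mt (Sum.inr k)) ^ 2) - 1)))) :=
  petz_renyi_tendsto_relative_entropy_general n s t hs ht L mt
end
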